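/- Let μ be a finite measure on [0,1], 0 < q < 1, c > 0, C a positive integer, and let f ∈ L^∞(μ). Suppose (M_j)_{j=0}^{n} and (N_i)_{i=0}^{n} are measurable functions with ‖M_j‖_{L¹(μ)} ≤ C and ‖N_i‖_{L^∞(μ)} ≤ C for all i, j, and suppose that for each t ∈ [0,1], the set {i : N_i(t) ≠ 0} has at most 2C elements. Let (a_{ij}) satisfy |a_{ij}| ≤ c·q^{|i−j|}. Then the function g(t) = ∑_{i,j} a_{ij} ⟨f, M_j⟩_μ N_i(t) satisfies ‖g‖_{L^∞(μ)} ≤ 2C³·c·(1+q)/(1−q) · ‖f‖_{L^∞(μ)}. -/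

import Mathlib

/-!
At each point `t` only the at most `2C` indices `i` with `N i t ≠ 0` contribute, each with
`|N i t| ≤ C`. For such `i` the row sum `∑ j, |a i j|` is dominated by the two-sided geometric
series `c ∑_{k ∈ ℤ} q^|k| = c (1 + q) / (1 - q)`, and Hölder's inequality for the pair `(∞, 1)`
gives `|∫ f M_j| ≤ C ‖f‖_∞`.
-/

open MeasureTheory Finset

lemma hasSum_pow_natAbs {q : ℝ} (hq0 : 0 ≤ q) (hq1 : q < 1) :
    HasSum (fun k : ℤ => q ^ k.natAbs) ((1 + q) / (1 - q)) := by
  have hgeom := hasSum_geometric_of_lt_one hq0 hq1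
  have hneg : HasSum (fun n : ℕ => q ^ (-((n : ℤ) + 1)).natAbs) (q * (1 - q)⁻¹) := by
    simpa only [show ∀ n : ℕ, (-((n : ℤ) + 1)).natAbs = n + 1 by omega, pow_succ']
      using hgeom.mul_left q
  have hpos : HasSum (fun n : ℕ => q ^ (n : ℤ).natAbs) (1 - q)⁻¹ := by
    simpa only [Int.natAbs_natCast] using hgeom
  rw [show (1 + q) / (1 - q) = (1 - q)⁻¹ + q * (1 - q)⁻¹ by ring]
  exact HasSum.of_nat_of_neg_add_one (f := fun k : ℤ => q ^ k.natAbs) hpos hneg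

lemma sum_pow_natAbs_sub_le {ι : Type*} {q : ℝ} (hq0 : 0 ≤ q) (hq1 : q < 1) (s : Finset ι)
    {e : ι → ℤ} (he : Function.Injective e) (i : ℤ) :
    ∑ j ∈ s, q ^ (i - e j).natAbs ≤ (1 + q) / (1 - q) := by
  have hinj : Set.InjOn (fun j => i - e j) s := fun x _ y _ hxy => he (sub_right_injective hxy)
  rw [← Finset.sum_image (f := fun k : ℤ => q ^ k.natAbs) hinj]
  exact sum_le_hasSum _ (fun _ _ => by positivity) (hasSum_pow_natAbs hq0 hq1)

lemma sum_abs_le_of_abs_le_pow_natAbs {ι : Type*} [Fintype ι] {q c : ℝ} (hq0 : 0 ≤ q)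
    (hq1 : q < 1) (hc : 0 ≤ c) {e : ι → ℤ} (he : Function.Injective e) {a : ι → ι → ℝ}
    (ha : ∀ i j, |a i j| ≤ c * q ^ (e i - e j).natAbs) (i : ι) :
    ∑ j, |a i j| ≤ c * ((1 + q) / (1 - q)) :=
  calc ∑ j, |a i j| ≤ ∑ j, c * q ^ (e i - e j).natAbs := sum_le_sum fun j _ => ha i j
    _ = c * ∑ j, q ^ (e i - e j).natAbs := by rw [mul_sum]
    _ ≤ c * ((1 + q) / (1 - q)) := by gcongr; exact sum_pow_natAbs_sub_le hq0 hq1 _ he _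

lemma abs_sum_mul_le_sum_abs_mul {κ : Type*} (s : Finset κ) (a b : κ → ℝ) {B : ℝ}
    (hb : ∀ j, |b j| ≤ B) : |∑ j ∈ s, a j * b j| ≤ (∑ j ∈ s, |a j|) * B :=
  calc |∑ j ∈ s, a j * b j| ≤ ∑ j ∈ s, |a j| * |b j| := by
        simpa only [abs_mul] using abs_sum_le_sum_abs (fun j => a j * b j) s
    _ ≤ ∑ j ∈ s, |a j| * B := by gcongr with j; exact hb j
    _ = (∑ j ∈ s, |a j|) * B := (sum_mul ..).symm

lemma abs_sum_mul_le_card_mul {ι : Type*} [Fintype ι] (r v : ι → ℝ) {R D : ℝ}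
    (hr : ∀ i, |r i| ≤ R) (hv : ∀ i, |v i| ≤ D) :
    |∑ i, r i * v i| ≤ #{i | v i ≠ 0} * (R * D) :=
  calc |∑ i, r i * v i| = |∑ i with v i ≠ 0, r i * v i| := by
        rw [sum_filter_of_ne fun i _ h => right_ne_zero_of_mul h]
    _ ≤ ∑ i with v i ≠ 0, |r i| * |v i| := by
        simpa only [abs_mul] using abs_sum_le_sum_abs (fun i => r i * v i) _
    _ ≤ ∑ i with v i ≠ 0, R * D := by
        gcongr with i
        exacts [(abs_nonneg _).trans (hr i), hr i, hv i]
    _ = #{i | v i ≠ 0} * (R * D) := by rw [sum_const, nsmul_eq_mul]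

lemma enorm_integral_mul_le {α : Type*} [MeasurableSpace α] {μ : Measure α} (f : α → ℝ)
    {g : α → ℝ} (hg : AEStronglyMeasurable g μ) :
    ‖∫ x, f x * g x ∂μ‖ₑ ≤ eLpNorm f ⊤ μ * eLpNorm g 1 μ :=
  calc ‖∫ x, f x * g x ∂μ‖ₑ ≤ eLpNorm (f • g) 1 μ := by
        rw [eLpNorm_one_eq_lintegral_enorm]; exact enorm_integral_le_lintegral_enorm _
    _ ≤ eLpNorm f ⊤ μ * eLpNorm g 1 μ := eLpNorm_smul_le_eLpNorm_top_mul_eLpNorm 1 hg f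

lemma ae_abs_le_of_eLpNorm_top_le {α : Type*} [MeasurableSpace α] {μ : Measure α} {g : α → ℝ}
    {K : ℝ} (hK : 0 ≤ K) (h : eLpNorm g ⊤ μ ≤ ENNReal.ofReal K) : ∀ᵐ x ∂μ, |g x| ≤ K := by
  filter_upwards [ae_le_eLpNormEssSup (f := g) (μ := μ)] with x hx
  rw [← eLpNorm_exponent_top, Real.enorm_eq_ofReal_abs] at hx
  exact (ENNReal.ofReal_le_ofReal_iff hK).1 (hx.trans h)

theorem stmt14_general (μ : Measure ℝ)
    (q c : ℝ) (hq0 : 0 < q) (hq1 : q < 1) (hc : 0 < c)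
    (C : ℕ) (n : ℕ)
    (f : ℝ → ℝ) (hf : eLpNorm f ⊤ μ < ⊤)
    (M N : Fin (n + 1) → ℝ → ℝ)
    (hMmeas : ∀ j, Integrable (M j) μ)
    (hM1 : ∀ j, eLpNorm (M j) 1 μ ≤ ENNReal.ofReal C)
    (hNinf : ∀ i, eLpNorm (N i) ⊤ μ ≤ ENNReal.ofReal C)
    (hNcard : ∀ t : ℝ,
      (Finset.univ.filter (fun i : Fin (n + 1) => N i t ≠ 0)).card ≤ 2 * C)
    (a : Matrix (Fin (n + 1)) (Fin (n + 1)) ℝ)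
    (ha : ∀ i j, |a i j| ≤ c * q ^ ((i : ℤ) - (j : ℤ)).natAbs) :
    eLpNorm (fun t => ∑ i, ∑ j, a i j * (∫ x, f x * M j x ∂μ) * N i t) ⊤ μ ≤
      ENNReal.ofReal (2 * (C : ℝ) ^ 3 * c * (1 + q) / (1 - q)) *
        eLpNorm f ⊤ μ := by
  set F := (eLpNorm f ⊤ μ).toReal
  set A := c * ((1 + q) / (1 - q))
  have hF : eLpNorm f ⊤ μ = ENNReal.ofReal F := (ENNReal.ofReal_toReal hf.ne).symm
  have hA : 0 ≤ A := by positivity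
  have hrow : ∀ i, ∑ j, |a i j| ≤ A := sum_abs_le_of_abs_le_pow_natAbs hq0.le hq1 hc.le
    (Nat.cast_injective.comp Fin.val_injective) ha
  have hI : ∀ j, |∫ x, f x * M j x ∂μ| ≤ C * F := by
    intro j
    have h := (enorm_integral_mul_le f (hMmeas j).aestronglyMeasurable).trans
      (mul_le_mul_of_nonneg_left (hM1 j) zero_le)
    rwa [hF, ← ENNReal.ofReal_mul ENNReal.toReal_nonneg, Real.enorm_eq_ofReal_abs,
      ENNReal.ofReal_le_ofReal_iff (by positivity), mul_comm] at h
  have hN : ∀ᵐ t ∂μ, ∀ i, |N i t| ≤ C :=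
    ae_all_iff.2 fun i => ae_abs_le_of_eLpNorm_top_le C.cast_nonneg (hNinf i)
  have hg : ∀ᵐ t ∂μ, ‖∑ i, ∑ j, a i j * (∫ x, f x * M j x ∂μ) * N i t‖ ≤
      2 * (C : ℝ) ^ 3 * c * (1 + q) / (1 - q) * F := by
    filter_upwards [hN] with t hNt
    simp_rw [Real.norm_eq_abs, ← Finset.sum_mul]
    calc _ ≤ #{i | N i t ≠ 0} * ((A * (C * F)) * C) := abs_sum_mul_le_card_mul _ _
          (fun i => (abs_sum_mul_le_sum_abs_mul _ _ _ hI).trans (by gcongr; exact hrow i)) hNt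
      _ ≤ (2 * C : ℕ) * ((A * (C * F)) * C) := by gcongr; exact hNcard t
      _ = 2 * (C : ℝ) ^ 3 * c * (1 + q) / (1 - q) * F := by push_cast; ring
  calc _ ≤ ENNReal.ofReal (2 * (C : ℝ) ^ 3 * c * (1 + q) / (1 - q) * F) := by
        rw [eLpNorm_exponent_top]; exact eLpNormEssSup_le_of_ae_bound hg
    _ = _ := by rw [ENNReal.ofReal_mul (by positivity), ← hF]

theorem stmt14 (μ : Measure ℝ) [IsFiniteMeasure μ]
    (q c : ℝ) (hq0 : 0 < q) (hq1 : q < 1) (hc : 0 < c)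
    (C : ℕ) (hC : 0 < C) (n : ℕ)
    (f : ℝ → ℝ) (hf : eLpNorm f ⊤ μ < ⊤)
    (M N : Fin (n + 1) → ℝ → ℝ)
    (hMmeas : ∀ j, Integrable (M j) μ) (hNmeas : ∀ i, Measurable (N i))
    (hM1 : ∀ j, eLpNorm (M j) 1 μ ≤ ENNReal.ofReal C)
    (hNinf : ∀ i, eLpNorm (N i) ⊤ μ ≤ ENNReal.ofReal C)
    (hNcard : ∀ t : ℝ,
      (Finset.univ.filter (fun i : Fin (n + 1) => N i t ≠ 0)).card ≤ 2 * C)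
    (a : Matrix (Fin (n + 1)) (Fin (n + 1)) ℝ)
    (ha : ∀ i j, |a i j| ≤ c * q ^ ((i : ℤ) - (j : ℤ)).natAbs) :
    eLpNorm (fun t => ∑ i, ∑ j, a i j * (∫ x, f x * M j x ∂μ) * N i t) ⊤ μ ≤
      ENNReal.ofReal (2 * (C : ℝ) ^ 3 * c * (1 + q) / (1 - q)) *
        eLpNorm f ⊤ μ :=
  stmt14_general μ q c hq0 hq1 hc C n f hf M N hMmeas hM1 hNinf hNcard a ha
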